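/- Let w be a word over {1,...,r} with unique Lyndon factorization w = l_1 l_2 ... l_n (l_1 ≥ l_2 ≥ ... ≥ l_n). Then β_dec(w) := β_circ(l_1)···β_circ(l_n), where β_circ(x_1...x_m) = b_{x_1 x_2} b_{x_2 x_3} ··· b_{x_m x_1}, defines a map from words to monomials in commuting variables b_{ij}, and ∑_{w} β_dec(w) over all words w equals ∏_{c nonperiodic cycle of K_r} 1/(1 - β(c)) as formal power series. -/

import Mathlib

/-- A word is Lyndon if it is nonempty and strictly lexicographically smaller than all
of its nontrivial cyclic rotations.  Nonperiodic cycles of the complete digraph `K_r`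
correspond bijectively to Lyndon words. -/
def IsLyndon {α : Type*} [LinearOrder α] (w : List α) : Prop :=
  w ≠ [] ∧ ∀ k, 0 < k → k < w.length → List.Lex (· < ·) w (w.rotate k)

/-- `β_circ(x₁…x_m) = b_{x₁x₂} b_{x₂x₃} ⋯ b_{x_m x₁}` (and `β_circ` of the empty word
is `1`), realized with the generic edge variables `b_{ij} = X (i,j)`. -/
noncomputable def betaCirc {r : ℕ} (w : List (Fin r)) : MvPowerSeries (Fin r × Fin r) ℚ :=
  ((w.zip (w.rotate 1)).map fun e => MvPowerSeries.X e).prod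

noncomputable instance {σ : Type*} : TopologicalSpace (MvPowerSeries σ ℚ) :=
  @Pi.topologicalSpace (σ →₀ ℕ) (fun _ => ℚ) (fun _ => ⊥)


/-!
Concatenating a multiset of Lyndon words in nonincreasing order is a bijection onto all words.
Injectivity is the uniqueness of the Lyndon factorization: the last factor of a nonincreasing
Lyndon factorization is the least nonempty suffix of the word, so it can be peeled off.
Along this bijection `β_dec` becomes `M ↦ ∏_{c ∈ M} β(c)`, so the sum over words is the sum over
multisets of cycles, i.e. the product of the geometric series `∑ₖ β(c)^k = (1 - β(c))⁻¹`.
The infinite sum and product converge coefficientwise since `β(c)` has degree `|c|`, so only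
finitely many cycles contribute to a given coefficient.
-/

namespace List

variable {α : Type*} [LinearOrder α]

theorem append_lt_append_of_lt_of_not_prefix {a b : List α} (h : a < b) (hab : ¬ a <+: b)
    (x y : List α) : a ++ x < b ++ y := by
  induction h with
  | nil => exact absurd nil_prefix hab
  | rel h => exact Lex.rel h
  | cons _ ih => exact Lex.cons (ih fun h => hab (cons_prefix_cons.2 ⟨rfl, h⟩))

theorem lt_of_append_lt_append_left {u v w : List α} (h : u ++ v < u ++ w) : v < w := by
  induction u with
  | nil => exact h
  | cons a u ih => exact ih (lex_cons_iff.1 h)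

theorem le_append_of_le {a b : List α} (h : a ≤ b) (t : List α) : a ≤ b ++ t := by
  rcases h.lt_or_eq with h | rfl
  · exact (show a < b ++ t from Lex.append_right _ t h).le
  · exact not_lt.1 (IsPrefix.le (prefix_append a t))

end List

namespace IsLyndon

variable {α : Type*} [LinearOrder α] {w u v : List α}

theorem lt_right_of_append (hw : IsLyndon (u ++ v)) (hu : u ≠ []) (hv : v ≠ []) :
    u ++ v < v := by
  have hu' := List.length_pos_iff.2 hu
  have hv' := List.length_pos_iff.2 hv
  have hrot : u ++ v < v ++ u := by
    simpa using hw.2 u.length hu' (by simp; omega)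
  by_contra hle
  rw [not_lt] at hle
  by_cases hpre : v <+: u ++ v
  · -- `u ++ v = v ++ s`, and then the rotation `s ++ v` would be smaller than `u ++ v`
    obtain ⟨s, hs⟩ := hpre
    have hlen : s.length = u.length := by
      have := congrArg List.length hs
      simp only [List.length_append] at this
      omega
    have hrot' : u ++ v < s ++ v := by
      have := hw.2 v.length hv' (by simp; omega)
      rw [← hs, List.rotate_append_length_eq] at this
      rwa [← hs]
    have hsu : s < u := List.lt_of_append_lt_append_left (hs ▸ hrot)
    exact lt_asymm hrot' (List.append_lt_append_of_lt_of_not_prefix hsu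
      (fun h => hsu.ne (h.eq_of_length hlen)) v v)
  · have hvu : v ++ u < u ++ v := by
      simpa using List.append_lt_append_of_lt_of_not_prefix
        (hle.lt_of_ne fun h => hpre (h ▸ List.prefix_refl _)) hpre u []
    exact lt_asymm hrot hvu

theorem le_of_isSuffix (hw : IsLyndon w) (hvw : v <:+ w) (hv : v ≠ []) : w ≤ v := by
  obtain ⟨u, rfl⟩ := hvw
  rcases eq_or_ne u [] with rfl | hu
  · exact le_rfl
  · exact (hw.lt_right_of_append hu hv).le

end IsLyndon

section LyndonFactorization

variable {α : Type*} [LinearOrder α]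

def IsLyndonFactorization (L : List (List α)) : Prop :=
  (∀ l ∈ L, IsLyndon l) ∧ L.Pairwise (· ≥ ·)

theorem le_of_isSuffix_flatten {m : List α} {L : List (List α)}
    (hL : ∀ l ∈ L, IsLyndon l ∧ m ≤ l) {s : List α} (hs : s <:+ L.flatten) (hne : s ≠ []) :
    m ≤ s := by
  induction L generalizing s with
  | nil => exact absurd (List.suffix_nil.1 hs) hne
  | cons a L ih =>
    have ih' := @ih (fun l hl => hL l (List.mem_cons_of_mem a hl))
    obtain ⟨hLa, hma⟩ := hL a List.mem_cons_self
    obtain ⟨p, hp⟩ := hs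
    rw [List.flatten_cons, List.append_eq_append_iff] at hp
    rcases hp with ⟨v, rfl, rfl⟩ | ⟨c, rfl, hc⟩
    · rcases eq_or_ne v [] with rfl | hv
      · exact ih' (List.suffix_refl _) hne
      · exact List.le_append_of_le (hma.trans (hLa.le_of_isSuffix ⟨p, rfl⟩ hv)) _
    · exact ih' ⟨c, hc.symm⟩ hne

theorem IsLyndonFactorization.last_le_of_isSuffix {L : List (List α)} {a : List α}
    (hL : IsLyndonFactorization (L ++ [a])) {s : List α} (hs : s <:+ (L ++ [a]).flatten)
    (hne : s ≠ []) : a ≤ s := by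
  refine le_of_isSuffix_flatten (fun l hl => ⟨hL.1 l hl, ?_⟩) hs hne
  rcases List.mem_append.1 hl with hl | hl
  · exact (List.pairwise_append.1 hL.2).2.2 l hl a (List.mem_singleton_self a)
  · rw [List.mem_singleton.1 hl]

theorem IsLyndonFactorization.eq_of_flatten_eq {L L' : List (List α)}
    (hL : IsLyndonFactorization L) (hL' : IsLyndonFactorization L')
    (h : L.flatten = L'.flatten) : L = L' := by
  induction L using List.reverseRecOn generalizing L' with
  | nil =>
    rcases L'.eq_nil_or_concat' with rfl | ⟨L'', b, rfl⟩
    · rfl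
    · exact absurd (List.flatten_eq_nil_iff.1 h.symm b (by simp)) (hL'.1 b (by simp)).1
  | append_singleton L a ih =>
    rcases L'.eq_nil_or_concat' with rfl | ⟨L'', b, rfl⟩
    · exact absurd (List.flatten_eq_nil_iff.1 h a (by simp)) (hL.1 a (by simp)).1
    · have hab : a = b := le_antisymm
        (hL.last_le_of_isSuffix (h ▸ by simp) (hL'.1 b (by simp)).1)
        (hL'.last_le_of_isSuffix (h ▸ by simp) (hL.1 a (by simp)).1)
      subst hab
      simp only [List.flatten_append, List.flatten_singleton] at h
      rw [ih ⟨fun l hl => hL.1 l (by simp [hl]), (List.pairwise_append.1 hL.2).1⟩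
        ⟨fun l hl => hL'.1 l (by simp [hl]), (List.pairwise_append.1 hL'.2).1⟩
        (List.append_cancel_right h)]

def lyndonConcat (M : Multiset {l : List α // IsLyndon l}) : List α :=
  ((M.sort (· ≥ ·)).map Subtype.val).flatten

theorem isLyndonFactorization_sort (M : Multiset {l : List α // IsLyndon l}) :
    IsLyndonFactorization ((M.sort (· ≥ ·)).map Subtype.val) :=
  ⟨by simp only [List.mem_map]; rintro _ ⟨c, -, rfl⟩; exact c.2,
    List.pairwise_map.2 (M.pairwise_sort _)⟩

theorem IsLyndonFactorization.eq_sort_of_flatten_eq {L : List (List α)}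
    (hL : IsLyndonFactorization L) {M : Multiset {l : List α // IsLyndon l}}
    (h : L.flatten = lyndonConcat M) : L = (M.sort (· ≥ ·)).map Subtype.val :=
  hL.eq_of_flatten_eq (isLyndonFactorization_sort M) h

theorem lyndonConcat_injective :
    Function.Injective (lyndonConcat : Multiset {l : List α // IsLyndon l} → List α) := by
  intro M M' h
  have := (isLyndonFactorization_sort M).eq_sort_of_flatten_eq h
  rw [← M.sort_eq (· ≥ ·), ← M'.sort_eq (· ≥ ·),
    List.map_injective_iff.2 Subtype.val_injective this]

theorem lyndonConcat_surjective
    (h : ∀ w : List α, ∃ L, IsLyndonFactorization L ∧ L.flatten = w) :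
    Function.Surjective (lyndonConcat : Multiset {l : List α // IsLyndon l} → List α) := by
  intro w
  obtain ⟨L, hL, rfl⟩ := h w
  let L' := L.pmap Subtype.mk hL.1
  refine ⟨L', ?_⟩
  have hsort : (L' : Multiset _).sort (· ≥ ·) = L' :=
    List.Perm.eq_of_pairwise' (Multiset.pairwise_sort _ _)
      (hL.2.pmap hL.1 fun _ _ _ _ => id) (Multiset.coe_eq_coe.1 (Multiset.sort_eq _ _))
  simp [lyndonConcat, hsort, L', List.map_pmap]

end LyndonFactorization

theorem Finset.prod_sum_eq_sum_finsupp_prod {ι M : Type*} [CommSemiring M] (s : Finset ι)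
    (t : ι → Finset ℕ) (f : ι → ℕ → M) (hf : ∀ i ∈ s, f i 0 = 1) :
    ∏ i ∈ s, ∑ k ∈ t i, f i k = ∑ m ∈ s.finsupp t, m.prod f := by
  classical
  rw [Finset.prod_sum, Finset.finsupp, Finset.sum_map]
  refine Finset.sum_congr rfl fun p _ => ?_
  simp only [Function.Embedding.coeFn_mk]
  rw [Finsupp.prod_of_support_subset _ (Finsupp.support_indicator_subset s p) f hf,
    ← Finset.prod_attach s]
  exact Finset.prod_congr rfl fun i _ => by rw [Finsupp.indicator_of_mem i.2]

open Finset Filter Topology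

namespace MvPowerSeries

variable {σ : Type*}

theorem le_order_finsuppProd_pow {R ι : Type*} [CommSemiring R] (x : ι → MvPowerSeries σ R)
    (m : ι →₀ ℕ) (i : ι) : m i • (x i).order ≤ (m.prod fun j k => x j ^ k).order := by
  by_cases hi : i ∈ m.support
  · rw [← m.mul_prod_erase i _ hi]
    exact (le_order_pow _).trans (le_self_add.trans le_order_mul)
  · simp [Finsupp.notMem_support_iff.1 hi]

theorem length_le_order_prod_X {R : Type*} [Semiring R] (L : List σ) :
    (L.length : ℕ∞) ≤ ((L.map fun e => X e).prod : MvPowerSeries σ R).order := by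
  induction L with
  | nil => simp
  | cons a L ih =>
    rw [List.map_cons, List.prod_cons, List.length_cons, Nat.cast_succ, add_comm]
    exact (add_le_add (one_le_order_iff_constCoeff_eq_zero.2 (constantCoeff_X a)) ih).trans
      le_order_mul

section CommRing

variable {R : Type*} [CommRing R]

theorem coeff_eq_of_lt_order_sub {f g : MvPowerSeries σ R} {d : σ →₀ ℕ}
    (h : d.degree < (f - g).order) : coeff d f = coeff d g :=
  sub_eq_zero.1 (map_sub (coeff d) f g ▸ coeff_of_lt_order h)

theorem lt_order_prod_sub_prod {ι : Type*} {s : Finset ι} {f g : ι → MvPowerSeries σ R} {n : ℕ}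
    (h : ∀ i ∈ s, (n : ℕ∞) < (f i - g i).order) :
    (n : ℕ∞) < (∏ i ∈ s, f i - ∏ i ∈ s, g i).order := by
  classical
  induction s using Finset.induction_on with
  | empty => simp
  | insert a s ha ih =>
    rw [prod_insert ha, prod_insert ha]
    have ha' := h a (mem_insert_self a s)
    have hs' := ih fun i hi => h i (mem_insert_of_mem hi)
    have hsplit : f a * ∏ i ∈ s, f i - g a * ∏ i ∈ s, g i
        = (f a - g a) * ∏ i ∈ s, f i + g a * (∏ i ∈ s, f i - ∏ i ∈ s, g i) := by ring
    rw [hsplit]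
    refine lt_of_lt_of_le (lt_min ?_ ?_) min_order_le_add
    · exact ha'.trans_le (le_self_add.trans le_order_mul)
    · exact hs'.trans_le (le_add_self.trans le_order_mul)

end CommRing

section Field

variable {k : Type*} [Field k]

theorem inv_one_sub_sub_geom_sum {x : MvPowerSeries σ k} (hx : constantCoeff x = 0) (N : ℕ) :
    (1 - x)⁻¹ - ∑ j ∈ range N, x ^ j = x ^ N * (1 - x)⁻¹ := by
  have hinv : (1 - x)⁻¹ * (1 - x) = 1 :=
    MvPowerSeries.inv_mul_cancel _ (by simp [hx])
  linear_combination (∑ j ∈ range N, x ^ j) * hinv - (1 - x)⁻¹ * mul_neg_geom_sum x N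

theorem le_order_inv_one_sub_sub_geom_sum {x : MvPowerSeries σ k} (hx : constantCoeff x = 0)
    (N : ℕ) : N • x.order ≤ ((1 - x)⁻¹ - ∑ j ∈ range N, x ^ j).order := by
  rw [inv_one_sub_sub_geom_sum hx]
  exact (le_order_pow N).trans (le_self_add.trans le_order_mul)

variable {ι : Type*} {x : ι → MvPowerSeries σ k}

theorem coeff_prod_inv_one_sub_of_subset (hx : ∀ i, constantCoeff (x i) = 0) {d : σ →₀ ℕ}
    {S s : Finset ι} (hS : ∀ i ∉ S, (d.degree : ℕ∞) < (x i).order) (hSs : S ⊆ s) :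
    coeff d (∏ i ∈ s, (1 - x i)⁻¹) = coeff d (∏ i ∈ S, (1 - x i)⁻¹) := by
  classical
  apply coeff_eq_of_lt_order_sub
  have htail : (d.degree : ℕ∞) < (∏ i ∈ s \ S, (1 - x i)⁻¹ - ∏ i ∈ s \ S, 1).order :=
    lt_order_prod_sub_prod fun i hi => by
      have h := le_order_inv_one_sub_sub_geom_sum (hx i) 1
      rw [one_smul, sum_range_one, pow_zero] at h
      exact (hS i (mem_sdiff.1 hi).2).trans_le h
  rw [prod_const_one] at htail
  rw [← prod_sdiff hSs, show ∀ a b : MvPowerSeries σ k, a * b - b = (a - 1) * b by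
    intro a b; ring]
  exact htail.trans_le (le_self_add.trans le_order_mul)

theorem coeff_sum_finsuppProd_pow_of_subset (hx : ∀ i, constantCoeff (x i) = 0)
    {d : σ →₀ ℕ} {S : Finset ι} (hS : ∀ i ∉ S, (d.degree : ℕ∞) < (x i).order)
    {T : Finset (ι →₀ ℕ)} (hST : S.finsupp (fun _ => range (d.degree + 1)) ⊆ T) :
    coeff d (∑ m ∈ T, m.prod fun i j => x i ^ j) = coeff d (∏ i ∈ S, (1 - x i)⁻¹) := by
  have hone i : (1 : ℕ∞) ≤ (x i).order := one_le_order_iff_constCoeff_eq_zero.2 (hx i)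
  have hsupp (m : ι →₀ ℕ) (hm : coeff d (m.prod fun i j => x i ^ j) ≠ 0) :
      m ∈ S.finsupp (fun _ => range (d.degree + 1)) := by
    have hle i : m i • (x i).order ≤ d.degree :=
      (le_order_finsuppProd_pow x m i).trans (order_le hm)
    refine mem_finsupp_iff.2 ⟨fun i hi => ?_, fun i _ => ?_⟩
    · by_contra hiS
      have hmi : 1 ≤ m i := Nat.one_le_iff_ne_zero.2 (Finsupp.mem_support_iff.1 hi)
      exact (hS i hiS).not_ge ((le_smul_of_one_le_left zero_le hmi).trans (hle i))
    · have : (m i : ℕ∞) ≤ d.degree := by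
        simpa using (nsmul_le_nsmul_right (hone i) (m i)).trans (hle i)
      exact mem_range_succ_iff.2 (by exact_mod_cast this)
  rw [map_sum, ← sum_subset hST fun m _ hm => not_imp_comm.1 (hsupp m) hm, ← map_sum,
    ← prod_sum_eq_sum_finsupp_prod _ _ _ fun _ _ => pow_zero _]
  refine (coeff_eq_of_lt_order_sub (lt_order_prod_sub_prod fun i _ => ?_)).symm
  refine lt_of_lt_of_le ?_ ((nsmul_le_nsmul_right (hone i) _).trans
    (le_order_inv_one_sub_sub_geom_sum (hx i) _))
  simpa using ENat.natCast_lt_natCast.2 (Nat.lt_succ_self d.degree)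

end Field

instance : T2Space (MvPowerSeries σ ℚ) := by
  let _ : TopologicalSpace ℚ := ⊥
  have : DiscreteTopology ℚ := ⟨rfl⟩
  exact Pi.t2Space

theorem tendsto_of_eventually_coeff_eq {X : Type*} {l : Filter X} {F : X → MvPowerSeries σ ℚ}
    {P : MvPowerSeries σ ℚ} (h : ∀ d, ∀ᶠ a in l, coeff d (F a) = coeff d P) :
    Tendsto F l (𝓝 P) :=
  letI : TopologicalSpace ℚ := ⊥
  tendsto_pi_nhds.2 fun d => tendsto_nhds_of_eventually_eq (h d)

variable {ι : Type*} {x : ι → MvPowerSeries σ ℚ}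

theorem exists_hasProd_inv_one_sub_and_hasSum_finsuppProd (hx : ∀ i, constantCoeff (x i) = 0)
    (hfin : ∀ n : ℕ, {i | (x i).order ≤ n}.Finite) :
    ∃ P, HasProd (fun i => (1 - x i)⁻¹) P ∧
      HasSum (fun m : ι →₀ ℕ => m.prod fun i j => x i ^ j) P := by
  let S (d : σ →₀ ℕ) := (hfin d.degree).toFinset
  have hS d : ∀ i ∉ S d, (d.degree : ℕ∞) < (x i).order := by simp [S]
  refine ⟨fun d => coeff d (∏ i ∈ S d, (1 - x i)⁻¹), ?_, ?_⟩
  · exact tendsto_of_eventually_coeff_eq fun d => (eventually_ge_atTop (S d)).mono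
      fun s hs => coeff_prod_inv_one_sub_of_subset hx (hS d) hs
  · exact tendsto_of_eventually_coeff_eq fun d => (eventually_ge_atTop _).mono
      fun T hT => coeff_sum_finsuppProd_pow_of_subset hx (hS d) hT

theorem exists_hasProd_inv_one_sub_and_hasSum_multisetProd (hx : ∀ i, constantCoeff (x i) = 0)
    (hfin : ∀ n : ℕ, {i | (x i).order ≤ n}.Finite) :
    ∃ P, HasProd (fun i => (1 - x i)⁻¹) P ∧ HasSum (fun M : Multiset ι => (M.map x).prod) P := by
  classical
  obtain ⟨P, hprod, hsum⟩ := exists_hasProd_inv_one_sub_and_hasSum_finsuppProd hx hfin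
  refine ⟨P, hprod, ?_⟩
  rw [← Multiset.toFinsupp.toEquiv.hasSum_iff] at hsum
  convert hsum using 2 with M
  exact Finset.prod_multiset_map_count M x

end MvPowerSeries

open MvPowerSeries

theorem length_le_order_betaCirc {r : ℕ} (w : List (Fin r)) :
    (w.length : ℕ∞) ≤ (betaCirc w).order := by
  simpa [betaCirc] using length_le_order_prod_X (R := ℚ) (w.zip (w.rotate 1))

theorem constantCoeff_betaCirc {r : ℕ} {w : List (Fin r)} (hw : w ≠ []) :
    constantCoeff (betaCirc w) = 0 :=
  one_le_order_iff_constCoeff_eq_zero.1 <|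
    le_trans (by simpa [Nat.one_le_iff_ne_zero] using hw) (length_le_order_betaCirc w)

theorem finite_setOf_order_betaCirc_le (r n : ℕ) :
    {c : {w : List (Fin r) // IsLyndon w} | (betaCirc c.1).order ≤ n}.Finite :=
  ((List.finite_length_le (Fin r) n).preimage Subtype.val_injective.injOn).subset
    fun c hc => by exact_mod_cast (length_le_order_betaCirc c.1).trans hc

/-- If `fact` assigns to each word its (unique) nonincreasing Lyndon factorization,
then with `β_dec(w) := β_circ(l₁) ⋯ β_circ(l_n)` for `fact w = (l₁, …, l_n)`, the sum
of `β_dec(w)` over all words `w` equals the product over all nonperiodic cycles `c` of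
`K_r` of `1/(1 - β(c))`, as formal power series in the commuting variables `b_{ij}`. -/
theorem sum_betaDec_eq_prod_nonperiodic_cycles (r : ℕ)
    (fact : List (Fin r) → List (List (Fin r)))
    (hjoin : ∀ w, (fact w).flatten = w)
    (hlyndon : ∀ w, ∀ l ∈ fact w, IsLyndon l)
    (hsorted : ∀ w, (fact w).Chain' (fun a b => ¬ List.Lex (· < ·) a b)) :
    ∑' w : List (Fin r), ((fact w).map betaCirc).prod
      = ∏' c : {w : List (Fin r) // IsLyndon w}, (1 - betaCirc c.1)⁻¹ := by
  have hfact w : IsLyndonFactorization (fact w) :=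
    ⟨hlyndon w, List.isChain_iff_pairwise.1 ((hsorted w).imp fun _ _ => not_lt.1)⟩
  obtain ⟨P, hprod, hsum⟩ := exists_hasProd_inv_one_sub_and_hasSum_multisetProd
    (fun c => constantCoeff_betaCirc c.2.1) (finite_setOf_order_betaCirc_le r)
  let e := Equiv.ofBijective lyndonConcat
    ⟨lyndonConcat_injective, lyndonConcat_surjective fun w => ⟨fact w, hfact w, hjoin w⟩⟩
  have hterm M : ((fact (lyndonConcat M)).map betaCirc).prod
      = (M.map fun c => betaCirc c.1).prod := by
    conv_rhs => rw [← M.sort_eq (· ≥ ·)]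
    rw [(hfact _).eq_sort_of_flatten_eq (hjoin _), List.map_map, Multiset.map_coe,
      Multiset.prod_coe]
    rfl
  rw [← e.tsum_eq]
  exact (tsum_congr hterm).trans (hsum.tsum_eq.trans hprod.tprod_eq.symm)
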